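/- arXiv:1408.3222 — 3 statements merged into one kernel-verified Lean document; each statement's English description precedes it below -/
import Mathlib

section
/- Let Δ ⊂ ℝ^n be a convex body (compact convex set with nonempty interior) with Lebesgue volume vol(Δ) > 0, and let f : Δ → ℝ be a nonnegative concave function. Then sup_{x∈Δ} f(x) ≤ ((n+1)/vol(Δ)) · ∫_Δ f(z) dz. -/
open MeasureTheory Set Filter Topology Module AffineMap

/-!
Fix `x₀ ∈ Δ` and `t ∈ (0, 1)`. The homothety `h` with centre `x₀` and ratio `t` maps `Δ` into
itself, and concavity gives `f (h z) ≥ (1 - t) f x₀ + t f z`. Integrating over `Δ` and changing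
variables (`h` scales volume by `t ^ n`) yields
`t ^ n ((1 - t) f x₀ vol Δ + t ∫ f) ≤ ∫ f`. By Bernoulli's inequality this gives
`t ^ n f x₀ vol Δ ≤ (n + 1) ∫ f`, and we let `t → 1`.
-/

theorem le_succ_mul_of_forall_pow_mul_le {a b : ℝ} (n : ℕ) (hb : 0 ≤ b)
    (h : ∀ t ∈ Ioo (0 : ℝ) 1, t ^ n * ((1 - t) * a + t * b) ≤ b) :
    a ≤ (n + 1) * b := by
  have hlt : ∀ t ∈ Ioo (0 : ℝ) 1, t ^ n * a ≤ (n + 1) * b := by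
    intro t ⟨ht0, ht1⟩
    have bernoulli : 1 + (n + 1 : ℕ) * (t - 1) ≤ (1 + (t - 1)) ^ (n + 1) :=
      one_add_mul_le_pow (by linarith) _
    simp only [add_sub_cancel, Nat.cast_succ] at bernoulli
    refine le_of_mul_le_mul_left ?_ (sub_pos.2 ht1)
    calc (1 - t) * (t ^ n * a) = t ^ n * ((1 - t) * a + t * b) - t ^ (n + 1) * b := by ring
      _ ≤ (1 - t ^ (n + 1)) * b := by linarith [h t ⟨ht0, ht1⟩]
      _ ≤ (1 - t) * ((n + 1) * b) := by nlinarith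
  have hlim : Tendsto (fun t : ℝ ↦ t ^ n * a) (𝓝[<] 1) (𝓝 (1 ^ n * a)) :=
    ((continuous_pow n).mul continuous_const).continuousWithinAt
  simpa using le_of_tendsto hlim (mem_of_superset (Ioo_mem_nhdsLT one_pos) hlt)

theorem homothety_eq_smul_add {R M : Type*} [CommRing R] [AddCommGroup M] [Module R M]
    (x₀ z : M) (t : R) : homothety x₀ t z = t • z + (x₀ - t • x₀) := by
  rw [homothety_apply, vsub_eq_sub, vadd_eq_add, smul_sub]
  abel

theorem Convex.mapsTo_homothety {𝕜 M : Type*} [Field 𝕜] [LinearOrder 𝕜] [IsStrictOrderedRing 𝕜]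
    [AddCommGroup M] [Module 𝕜 M] {s : Set M} (hs : Convex 𝕜 s) {x₀ : M} (hx₀ : x₀ ∈ s) {t : 𝕜}
    (ht : t ∈ Icc (0 : 𝕜) 1) : MapsTo (homothety x₀ t) s s := fun _ hz ↦ by
  rw [homothety_eq_lineMap]
  exact hs.lineMap_mem hx₀ hz ht

theorem ConcaveOn.combo_le_setIntegral_comp_homothety {E : Type*} [AddCommGroup E] [Module ℝ E]
    [MeasurableSpace E] {μ : Measure E} {s : Set E} {f : E → ℝ}
    (hf : ConcaveOn ℝ s f) (hs : MeasurableSet s) (hμs : μ s ≠ ⊤) (hfi : IntegrableOn f s μ)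
    {x₀ : E} (hx₀ : x₀ ∈ s) {t : ℝ} (ht : t ∈ Icc (0 : ℝ) 1)
    (hfh : IntegrableOn (fun z ↦ f (homothety x₀ t z)) s μ) :
    (1 - t) * (f x₀ * μ.real s) + t * ∫ z in s, f z ∂μ ≤ ∫ z in s, f (homothety x₀ t z) ∂μ := by
  have hcombo : ∀ z ∈ s, (1 - t) * f x₀ + t * f z ≤ f (homothety x₀ t z) := fun z hz ↦ by
    rw [homothety_eq_lineMap, lineMap_apply_module]
    exact hf.2 hx₀ hz (by linarith [ht.2]) ht.1 (by ring)
  calc (1 - t) * (f x₀ * μ.real s) + t * ∫ z in s, f z ∂μ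
      = ∫ z in s, ((1 - t) * f x₀ + t * f z) ∂μ := by
        rw [integral_add (f := fun _ ↦ (1 - t) * f x₀) (integrableOn_const hμs)
          (hfi.const_mul t), setIntegral_const, integral_const_mul, smul_eq_mul]
        ring
    _ ≤ ∫ z in s, f (homothety x₀ t z) ∂μ :=
        setIntegral_mono_on ((integrableOn_const hμs).add (hfi.const_mul t)) hfh hs hcombo

section Homothety

variable {E F : Type*} [NormedAddCommGroup E] [NormedSpace ℝ E] [MeasurableSpace E]
  [BorelSpace E] [FiniteDimensional ℝ E] [NormedAddCommGroup F]
  (μ : Measure E) [μ.IsAddHaarMeasure]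

theorem integral_comp_homothety [NormedSpace ℝ F] (g : E → F) (x₀ : E) {t : ℝ} (ht : 0 ≤ t) :
    ∫ z, g (homothety x₀ t z) ∂μ = (t ^ finrank ℝ E)⁻¹ • ∫ z, g z ∂μ := by
  simp_rw [homothety_eq_smul_add]
  rw [μ.integral_comp_smul_of_nonneg (fun y ↦ g (y + (x₀ - t • x₀))) t (hR := ht),
    integral_add_right_eq_self]

theorem MeasureTheory.Integrable.comp_homothety {g : E → F} (hg : Integrable g μ) (x₀ : E) {t : ℝ}
    (ht : t ≠ 0) : Integrable (fun z ↦ g (homothety x₀ t z)) μ := by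
  simp_rw [homothety_eq_smul_add]
  exact (hg.comp_add_right _).comp_smul ht

theorem MeasureTheory.IntegrableOn.comp_homothety {s : Set E} {f : E → F} (hf : IntegrableOn f s μ)
    (hs : MeasurableSet s) {x₀ : E} {t : ℝ} (ht : t ≠ 0) (hst : MapsTo (homothety x₀ t) s s) :
    IntegrableOn (fun z ↦ f (homothety x₀ t z)) s μ :=
  ((((integrable_indicator_iff hs).2 hf).comp_homothety μ x₀ ht).integrableOn).congr_fun
    (fun _ hz ↦ indicator_of_mem (hst hz) f) hs

/-- Extend `f` by zero outside `s` and change variables over the whole space. -/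
theorem setIntegral_comp_homothety_le {s : Set E} {f : E → ℝ} (hs : MeasurableSet s)
    (hf₀ : ∀ x ∈ s, 0 ≤ f x) (hf : IntegrableOn f s μ) {x₀ : E} {t : ℝ} (ht : 0 < t)
    (hst : MapsTo (homothety x₀ t) s s) :
    ∫ z in s, f (homothety x₀ t z) ∂μ ≤ (t ^ finrank ℝ E)⁻¹ * ∫ z in s, f z ∂μ := by
  have hF : Integrable (s.indicator f) μ := (integrable_indicator_iff hs).2 hf
  calc ∫ z in s, f (homothety x₀ t z) ∂μ = ∫ z in s, s.indicator f (homothety x₀ t z) ∂μ :=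
        setIntegral_congr_fun hs fun _ hz ↦ (indicator_of_mem (hst hz) f).symm
    _ ≤ ∫ z, s.indicator f (homothety x₀ t z) ∂μ :=
        setIntegral_le_integral (hF.comp_homothety μ x₀ ht.ne')
          (.of_forall fun _ ↦ indicator_nonneg hf₀ _)
    _ = (t ^ finrank ℝ E)⁻¹ * ∫ z in s, f z ∂μ := by
        rw [integral_comp_homothety μ _ x₀ ht.le, integral_indicator hs, smul_eq_mul]

theorem ConcaveOn.pow_mul_combo_le_setIntegral {s : Set E} {f : E → ℝ}
    (hf : ConcaveOn ℝ s f) (hs : MeasurableSet s) (hμs : μ s ≠ ⊤) (hf₀ : ∀ x ∈ s, 0 ≤ f x)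
    (hfi : IntegrableOn f s μ) {x₀ : E} (hx₀ : x₀ ∈ s) {t : ℝ} (ht : t ∈ Ioc (0 : ℝ) 1) :
    t ^ finrank ℝ E * ((1 - t) * (f x₀ * μ.real s) + t * ∫ z in s, f z ∂μ) ≤
      ∫ z in s, f z ∂μ := by
  have hst := hf.1.mapsTo_homothety hx₀ (Ioc_subset_Icc_self ht)
  have htd : 0 < t ^ finrank ℝ E := pow_pos ht.1 _
  calc t ^ finrank ℝ E * ((1 - t) * (f x₀ * μ.real s) + t * ∫ z in s, f z ∂μ)
      ≤ t ^ finrank ℝ E * ∫ z in s, f (homothety x₀ t z) ∂μ :=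
        mul_le_mul_of_nonneg_left (hf.combo_le_setIntegral_comp_homothety hs hμs hfi hx₀
          (Ioc_subset_Icc_self ht) (hfi.comp_homothety μ hs ht.1.ne' hst)) htd.le
    _ ≤ t ^ finrank ℝ E * ((t ^ finrank ℝ E)⁻¹ * ∫ z in s, f z ∂μ) :=
        mul_le_mul_of_nonneg_left (setIntegral_comp_homothety_le μ hs hf₀ hfi ht.1 hst) htd.le
    _ = ∫ z in s, f z ∂μ := mul_inv_cancel_left₀ htd.ne' _

end Homothety

theorem sup_le_average_of_concave_general (n : ℕ) (Δ : Set (Fin n → ℝ))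
    (hcomp : IsCompact Δ) (hpos : 0 < volume Δ)
    (f : (Fin n → ℝ) → ℝ) (hf : ContinuousOn f Δ)
    (hnn : ∀ x ∈ Δ, 0 ≤ f x) (hconc : ConcaveOn ℝ Δ f) :
    ∀ x ∈ Δ, f x ≤ ((n + 1 : ℝ) / (volume Δ).toReal) * ∫ z in Δ, f z := by
  intro x₀ hx₀
  have hV : 0 < (volume Δ).toReal := ENNReal.toReal_pos hpos.ne' hcomp.measure_lt_top.ne
  have key := le_succ_mul_of_forall_pow_mul_le n (setIntegral_nonneg hcomp.measurableSet hnn)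
    fun t ht ↦ by
      simpa [finrank_fin_fun] using hconc.pow_mul_combo_le_setIntegral volume
        hcomp.measurableSet hcomp.measure_lt_top.ne hnn (hf.integrableOn_compact hcomp) hx₀
        (Ioo_subset_Ioc_self ht)
  rw [div_mul_eq_mul_div, le_div_iff₀ hV]
  exact key

theorem sup_le_average_of_concave (n : ℕ) (Δ : Set (Fin n → ℝ))
    (hcomp : IsCompact Δ) (hconv : Convex ℝ Δ) (hpos : 0 < volume Δ)
    (f : (Fin n → ℝ) → ℝ) (hf : ContinuousOn f Δ)
    (hnn : ∀ x ∈ Δ, 0 ≤ f x) (hconc : ConcaveOn ℝ Δ f) :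
    ∀ x ∈ Δ, f x ≤ ((n + 1 : ℝ) / (volume Δ).toReal) * ∫ z in Δ, f z :=
  sup_le_average_of_concave_general n Δ hcomp hpos f hf hnn hconc
end

section
/- Let Δ ⊂ ℝ^n be a convex body and f : Δ → ℝ a concave continuous function. Then for all x ∈ Δ, min_{y∈Δ} f(y) ≤ f(x) ≤ ((n+1)/vol(Δ)) ∫_Δ (f(z) − min_{y∈Δ} f(y)) dz + min_{y∈Δ} f(y). -/
/-!
Subtract the minimum `m` so that `g = f - m` is concave and nonnegative, and fix `x ∈ Δ`.
For `0 < t < 1` the homothety `z ↦ (1 - t) • x + t • z` maps `Δ` into itself and scales volume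
by `t ^ n`; concavity gives `g ((1 - t) • x + t • z) ≥ (1 - t) g x + t g z`, and integrating over
`Δ` yields `(1 - t) g x vol Δ + t ∫ g ≤ t⁻ⁿ ∫ g`. Dividing by `1 - t` and letting `t → 1` gives
`g x vol Δ ≤ (n + 1) ∫ g`.
-/

open MeasureTheory Set Module

theorem le_add_one_mul_of_forall_Ioo_le_inv_pow_mul {a b : ℝ} (n : ℕ)
    (h : ∀ t ∈ Ioo (0 : ℝ) 1, (1 - t) * a + t * b ≤ (t ^ n)⁻¹ * b) :
    a ≤ (n + 1) * b := by
  -- multiplying by `t ^ n / (1 - t)` turns the hypothesis into a polynomial inequality in `t`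
  have hpoly : ∀ t ∈ Ioo (0 : ℝ) 1, t ^ n * a ≤ (∑ i ∈ Finset.range (n + 1), t ^ i) * b := by
    rintro t ⟨ht0, ht1⟩
    have htn : 0 < t ^ n := pow_pos ht0 n
    have hgeom := geom_sum_mul t (n + 1)
    have hscaled : t ^ n * ((1 - t) * a + t * b) ≤ b := by
      simpa [← mul_assoc, mul_inv_cancel₀ htn.ne'] using
        mul_le_mul_of_nonneg_left (h t ⟨ht0, ht1⟩) htn.le
    refine le_of_mul_le_mul_left ?_ (sub_pos.2 ht1)
    linear_combination hscaled + b * hgeom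
  have hclosed : IsClosed {t : ℝ | t ^ n * a ≤ (∑ i ∈ Finset.range (n + 1), t ^ i) * b} :=
    isClosed_le (by fun_prop) (by fun_prop)
  have hone : (1 : ℝ) ∈ closure (Ioo 0 1) := by simp [closure_Ioo zero_ne_one]
  simpa using hclosed.closure_subset_iff.2 hpoly hone

section AddHaar

variable {E F : Type*} [NormedAddCommGroup E] [NormedSpace ℝ E] [MeasurableSpace E] [BorelSpace E]
  [FiniteDimensional ℝ E] (μ : Measure E) [μ.IsAddHaarMeasure]
  [NormedAddCommGroup F]

theorem integral_comp_add_smul_of_nonneg [NormedSpace ℝ F] (G : E → F) (c : E) {t : ℝ}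
    (ht : 0 ≤ t) :
    ∫ z, G (c + t • z) ∂μ = (t ^ finrank ℝ E)⁻¹ • ∫ z, G z ∂μ := by
  rw [Measure.integral_comp_smul_of_nonneg μ (fun w => G (c + w)) t (hR := ht),
    integral_add_left_eq_self]

theorem MeasureTheory.Integrable.comp_add_smul {G : E → F} (hG : Integrable G μ) (c : E) {t : ℝ}
    (ht : t ≠ 0) :
    Integrable (fun z => G (c + t • z)) μ :=
  (hG.comp_add_left c).comp_smul ht

variable {μ}

theorem ConcaveOn.mul_measureReal_add_mul_setIntegral_le {s : Set E} {g : E → ℝ}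
    (hg : ConcaveOn ℝ s g) (hs : MeasurableSet s) (hμs : μ s ≠ ⊤) (hg0 : ∀ z ∈ s, 0 ≤ g z)
    (hgi : IntegrableOn g s μ) {x : E} (hx : x ∈ s) {t : ℝ} (ht0 : 0 < t) (ht1 : t ≤ 1) :
    (1 - t) * g x * μ.real s + t * ∫ z in s, g z ∂μ ≤
      (t ^ finrank ℝ E)⁻¹ * ∫ z in s, g z ∂μ := by
  set h : E → E := fun z => (1 - t) • x + t • z
  have hmaps : MapsTo h s s := fun z hz => hg.1 hx hz (by linarith) ht0.le (by ring)
  -- extended by zero, `g` can be integrated over all of `E`, where the change of variables is exact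
  set G := s.indicator g
  have hG0 : 0 ≤ᵐ[μ] fun z => G (h z) :=
    .of_forall fun z => indicator_nonneg (fun y hy => hg0 y hy) _
  have hGi : Integrable (fun z => G (h z)) μ :=
    ((integrable_indicator_iff hs).2 hgi).comp_add_smul μ _ ht0.ne'
  have hGh : EqOn (fun z => G (h z)) (g ∘ h) s := fun z hz => indicator_of_mem (hmaps hz) g
  have hconc : ∀ z ∈ s, (1 - t) * g x + t * g z ≤ g (h z) := fun z hz => by
    simpa using hg.2 hx hz (by linarith) ht0.le (by ring)
  calc (1 - t) * g x * μ.real s + t * ∫ z in s, g z ∂μ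
      = ∫ z in s, ((1 - t) * g x + t * g z) ∂μ := by
        rw [integral_add (integrableOn_const (C := (1 - t) * g x) hμs) (hgi.const_mul t),
          setIntegral_const, integral_const_mul, smul_eq_mul]
        ring
    _ ≤ ∫ z in s, G (h z) ∂μ :=
        setIntegral_mono_on ((integrableOn_const hμs).add (hgi.const_mul t)) hGi.integrableOn hs
          fun z hz => (hconc z hz).trans_eq (hGh hz).symm
    _ ≤ ∫ z, G (h z) ∂μ := setIntegral_le_integral hGi hG0
    _ = (t ^ finrank ℝ E)⁻¹ * ∫ z in s, g z ∂μ := by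
        rw [integral_comp_add_smul_of_nonneg μ G _ ht0.le, integral_indicator hs, smul_eq_mul]

theorem ConcaveOn.mul_measureReal_le_setIntegral {s : Set E} {g : E → ℝ}
    (hg : ConcaveOn ℝ s g) (hs : MeasurableSet s) (hμs : μ s ≠ ⊤) (hg0 : ∀ z ∈ s, 0 ≤ g z)
    (hgi : IntegrableOn g s μ) {x : E} (hx : x ∈ s) :
    g x * μ.real s ≤ (finrank ℝ E + 1) * ∫ z in s, g z ∂μ :=
  le_add_one_mul_of_forall_Ioo_le_inv_pow_mul _ fun t ht => by
    simpa only [mul_assoc] using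
      hg.mul_measureReal_add_mul_setIntegral_le hs hμs hg0 hgi hx ht.1 ht.2.le

end AddHaar

theorem concave_between_min_and_average_general (n : ℕ) (Δ : Set (Fin n → ℝ))
    (hcomp : IsCompact Δ)
    (hpos : 0 < volume Δ)
    (f : (Fin n → ℝ) → ℝ) (hf : ContinuousOn f Δ) (hconc : ConcaveOn ℝ Δ f) :
    ∀ x ∈ Δ, sInf (f '' Δ) ≤ f x ∧
      f x ≤ ((n + 1 : ℝ) / (volume Δ).toReal) *
          (∫ z in Δ, (f z - sInf (f '' Δ))) + sInf (f '' Δ) := by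
  intro x hx
  set m := sInf (f '' Δ)
  have hmin : ∀ z ∈ Δ, m ≤ f z := fun z hz =>
    csInf_le (hcomp.image_of_continuousOn hf).bddBelow (mem_image_of_mem f hz)
  refine ⟨hmin x hx, ?_⟩
  have hVpos : 0 < (volume Δ).toReal := ENNReal.toReal_pos hpos.ne' hcomp.measure_lt_top.ne
  have hbound := (hconc.sub (convexOn_const m hconc.1)).mul_measureReal_le_setIntegral
    hcomp.measurableSet (hcomp.measure_lt_top (μ := volume)).ne
    (fun z hz => sub_nonneg.2 (hmin z hz))
    ((hf.sub continuousOn_const).integrableOn_compact hcomp) hx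
  rw [finrank_fin_fun, measureReal_def] at hbound
  rw [div_mul_eq_mul_div, ← sub_le_iff_le_add, le_div_iff₀ hVpos]
  exact hbound

theorem concave_between_min_and_average (n : ℕ) (Δ : Set (Fin n → ℝ))
    (hne : Δ.Nonempty) (hcomp : IsCompact Δ) (hconv : Convex ℝ Δ)
    (hpos : 0 < volume Δ)
    (f : (Fin n → ℝ) → ℝ) (hf : ContinuousOn f Δ) (hconc : ConcaveOn ℝ Δ f) :
    ∀ x ∈ Δ, sInf (f '' Δ) ≤ f x ∧
      f x ≤ ((n + 1 : ℝ) / (volume Δ).toReal) *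
          (∫ z in Δ, (f z - sInf (f '' Δ))) + sInf (f '' Δ) :=
  concave_between_min_and_average_general n Δ hcomp hpos f hf hconc
end

section
/- Let (M, μ) be a measure space, Δ ⊂ ℝ^n a convex body, and (ϑ_w)_{w∈M} a family of continuous concave functions ϑ_w : Δ → ℝ such that (a) for each vertex m of the polytope Δ the function w ↦ ϑ_w(m) is μ-integrable, and (b) the function w ↦ ∫_Δ ϑ_w(x) dx is μ-integrable. Then the function (w,x) ↦ ϑ_w(x) is integrable on M × Δ with respect to μ × vol, provided it is measurable. -/
/-!
On the polytope `Δ = conv V` a concave `ϑ_w` is bounded below by its minimum `m w` over the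
vertices, and `m` is integrable as a finite minimum of integrable functions. Since
`|t| ≤ t + 2 |c|` whenever `c ≤ t`, the fibre integrals `∫_Δ |ϑ_w|` are dominated by
`|∫_Δ ϑ_w| + 2 vol(Δ) |m w|`, which is integrable in `w`; Fubini–Tonelli concludes.
-/

open MeasureTheory Set

section

variable {α β : Type*} [MeasurableSpace α] [MeasurableSpace β] {μ : Measure α}

theorem Integrable.finset_inf' {ι E : Type*} [NormedAddCommGroup E] [Lattice E] [HasSolidNorm E]
    [IsOrderedAddMonoid E] {s : Finset ι} (hs : s.Nonempty) {f : ι → α → E}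
    (hf : ∀ i ∈ s, Integrable (f i) μ) :
    Integrable (fun a => s.inf' hs fun i => f i a) μ := by
  induction hs using Finset.Nonempty.cons_induction with
  | singleton i => simpa using hf i (by simp)
  | cons i s hi hs ih =>
    simp only [Finset.inf'_cons hs]
    exact (hf i (by simp)).inf (ih fun j hj => hf j (Finset.mem_cons_of_mem hj))

theorem integral_norm_le_integral_add_of_ae_le [IsFiniteMeasure μ] {f : α → ℝ} {c : ℝ}
    (hf : Integrable f μ) (hc : ∀ᵐ a ∂μ, c ≤ f a) :
    ∫ a, ‖f a‖ ∂μ ≤ ∫ a, f a ∂μ + 2 * μ.real univ * |c| := by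
  have hbound : ∀ᵐ a ∂μ, ‖f a‖ ≤ f a + 2 * |c| := by
    filter_upwards [hc] with a ha
    rw [Real.norm_eq_abs]
    rcases abs_cases (f a) with ⟨h, _⟩ | ⟨h, _⟩ <;> rw [h] <;>
      linarith [abs_nonneg c, neg_abs_le c]
  calc ∫ a, ‖f a‖ ∂μ ≤ ∫ a, (f a + 2 * |c|) ∂μ :=
        integral_mono_ae hf.norm (hf.add (integrable_const _)) hbound
    _ = ∫ a, f a ∂μ + 2 * μ.real univ * |c| := by
        rw [integral_add hf (integrable_const _), integral_const, smul_eq_mul]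
        ring

theorem integrable_prod_of_ae_le {ν : Measure β} [IsFiniteMeasure ν] {f : α × β → ℝ}
    {g : α → ℝ} (hf : AEStronglyMeasurable f (μ.prod ν))
    (hf_sec : ∀ᵐ a ∂μ, Integrable (fun b => f (a, b)) ν)
    (hf_int : Integrable (fun a => ∫ b, f (a, b) ∂ν) μ) (hg : Integrable g μ)
    (hgf : ∀ᵐ a ∂μ, ∀ᵐ b ∂ν, g a ≤ f (a, b)) :
    Integrable f (μ.prod ν) := by
  rw [integrable_prod_iff hf]
  refine ⟨hf_sec, (hf_int.norm.add (hg.norm.const_mul (2 * ν.real univ))).mono'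
    hf.norm.integral_prod_right' ?_⟩
  filter_upwards [hf_sec, hgf] with a ha hga
  rw [Real.norm_of_nonneg (integral_nonneg fun _ => norm_nonneg _)]
  calc ∫ b, ‖f (a, b)‖ ∂ν ≤ ∫ b, f (a, b) ∂ν + 2 * ν.real univ * |g a| :=
        integral_norm_le_integral_add_of_ae_le ha hga
    _ ≤ ‖∫ b, f (a, b) ∂ν‖ + 2 * ν.real univ * ‖g a‖ := by
        rw [Real.norm_eq_abs (g a)]
        gcongr
        exact Real.le_norm_self _

end

theorem integrable_prod_of_concave_family_general (n : ℕ) {M : Type*} [MeasurableSpace M]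
    (μ : Measure M) (V : Finset (Fin n → ℝ)) (hV : V.Nonempty)
    (ϑ : M → (Fin n → ℝ) → ℝ)
    (hconc : ∀ w, ConcaveOn ℝ (convexHull ℝ (V : Set (Fin n → ℝ))) (ϑ w))
    (hcont : ∀ w, ContinuousOn (ϑ w) (convexHull ℝ (V : Set (Fin n → ℝ))))
    (ha : ∀ v ∈ V, Integrable (fun w => ϑ w v) μ)
    (hb : Integrable (fun w => ∫ x in convexHull ℝ (V : Set (Fin n → ℝ)), ϑ w x) μ)
    (hmeas : AEStronglyMeasurable (fun p : M × (Fin n → ℝ) => ϑ p.1 p.2)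
      (μ.prod (volume.restrict (convexHull ℝ (V : Set (Fin n → ℝ)))))) :
    Integrable (fun p : M × (Fin n → ℝ) => ϑ p.1 p.2)
      (μ.prod (volume.restrict (convexHull ℝ (V : Set (Fin n → ℝ))))) := by
  set Δ := convexHull ℝ (V : Set (Fin n → ℝ))
  have hΔ : IsCompact Δ := V.finite_toSet.isCompact_convexHull (𝕜 := ℝ)
  have : IsFiniteMeasure (volume.restrict Δ) :=
    isFiniteMeasure_restrict.mpr hΔ.measure_lt_top.ne
  have hmin_le : ∀ w, ∀ x ∈ Δ, V.inf' hV (fun v => ϑ w v) ≤ ϑ w x := fun w _ hx =>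
    ConvexOn.inf_le_of_mem_convexHull (hconc w) (subset_convexHull ℝ _) hx
  exact integrable_prod_of_ae_le hmeas
    (ae_of_all _ fun w => (hcont w).integrableOn_compact hΔ) hb
    (Integrable.finset_inf' hV ha)
    (ae_of_all _ fun w => (ae_restrict_mem hΔ.measurableSet).mono (hmin_le w))

theorem integrable_prod_of_concave_family (n : ℕ) {M : Type*} [MeasurableSpace M]
    (μ : Measure M) (V : Finset (Fin n → ℝ)) (hV : V.Nonempty)
    (hpos : 0 < volume (convexHull ℝ (V : Set (Fin n → ℝ))))
    (ϑ : M → (Fin n → ℝ) → ℝ)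
    (hconc : ∀ w, ConcaveOn ℝ (convexHull ℝ (V : Set (Fin n → ℝ))) (ϑ w))
    (hcont : ∀ w, ContinuousOn (ϑ w) (convexHull ℝ (V : Set (Fin n → ℝ))))
    (ha : ∀ v ∈ V, Integrable (fun w => ϑ w v) μ)
    (hb : Integrable (fun w => ∫ x in convexHull ℝ (V : Set (Fin n → ℝ)), ϑ w x) μ)
    (hmeas : AEStronglyMeasurable (fun p : M × (Fin n → ℝ) => ϑ p.1 p.2)
      (μ.prod (volume.restrict (convexHull ℝ (V : Set (Fin n → ℝ)))))) :
    Integrable (fun p : M × (Fin n → ℝ) => ϑ p.1 p.2)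
      (μ.prod (volume.restrict (convexHull ℝ (V : Set (Fin n → ℝ))))) :=
  integrable_prod_of_concave_family_general n μ V hV ϑ hconc hcont ha hb hmeas
end
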